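/- Let G ⊂ ℚ_p be a finite set, N ∈ ℤ, K = ⊔_{I∈G}(I + p^Nℤ_p) a disjoint union, A = (A_{JK})_{J,K∈G} nonnegative reals, γ_I = ∑_K A_{IK}, and J_N(x,y) = p^N ∑_{J,K∈G} A_{JK} 1_{J+p^Nℤ_p}(x) 1_{K+p^Nℤ_p}(y). Let L be the operator (Lφ)(x) = ∫_K (φ(y) − φ(x)) J_N(x,y) dy. If Ψ : K → ℂ is integrable, supported in I + p^Nℤ_p for some I ∈ G, and satisfies ∫ Ψ(y) dy = 0, then LΨ = −γ_I Ψ; i.e., Ψ is an eigenfunction of L with eigenvalue −γ_I. -/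

import Mathlib

/-!
For `x` in the ball `J₀ + p^N ℤ_p`, the kernel `J_N(x, ·)` equals the constant `p^N A_{J₀K}` on each
ball `K + p^N ℤ_p`. Hence `Ψ · J_N(x, ·) = p^N A_{J₀I} Ψ` integrates to `0`, while `J_N(x, ·)` has
mass `∑_K p^N A_{J₀K} vol(K + p^N ℤ_p) = γ_{J₀}`; the volume `p^{-N}` of a ball comes from splitting
it into `p` translates of the next smaller ball. Finally `γ_{J₀} Ψ(x) = γ_I Ψ(x)`, because
`Ψ(x) = 0` unless `J₀ = I`.
-/

open MeasureTheory Metric Set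
open scoped ENNReal

namespace Padic

variable {p : ℕ} [Fact p.Prime]

lemma exists_natCast_norm_sub_le {y : ℚ_[p]} (hy : ‖y‖ ≤ 1) :
    ∃ i < p, ‖y - i‖ ≤ (p : ℝ) ^ (-1 : ℤ) := by
  obtain ⟨i, hip, hi⟩ := PadicInt.exists_mem_range (p := p) ⟨y, hy⟩
  refine ⟨i, hip, ?_⟩
  -- the norm of `⟨y, hy⟩ - i` in `ℤ_[p]` is `‖y - i‖` by definition
  rw [norm_le_pow_iff_norm_lt_pow_add_one, neg_add_cancel, zpow_zero]
  exact PadicInt.mem_nonunits.1 hi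

lemma closedBall_zero_zpow_eq_biUnion (n : ℤ) :
    closedBall (0 : ℚ_[p]) ((p : ℝ) ^ (-n)) =
      ⋃ i ∈ Finset.range p, closedBall ((i : ℚ_[p]) * p ^ n) ((p : ℝ) ^ (-(n + 1))) := by
  have hp : (p : ℝ) ≠ 0 := by exact_mod_cast (Fact.out : p.Prime).ne_zero
  apply Subset.antisymm
  · intro x hx
    rw [mem_closedBall_zero_iff] at hx
    obtain ⟨i, hip, hi⟩ := exists_natCast_norm_sub_le (y := x * (p : ℚ_[p]) ^ (-n)) (by
      rw [norm_mul, norm_p_zpow, neg_neg, ← zpow_neg_mul_zpow_self n hp]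
      gcongr)
    refine mem_biUnion (Finset.mem_coe.2 (Finset.mem_range.2 hip)) ?_
    have hxi : x - i * p ^ n = (x * p ^ (-n) - i) * p ^ n := by
      rw [sub_mul, mul_assoc, zpow_neg_mul_zpow_self n (by exact_mod_cast hp), mul_one]
    rw [mem_closedBall_iff_norm, hxi, norm_mul, norm_p_zpow, neg_add, zpow_add₀ hp, mul_comm]
    gcongr
  · refine iUnion₂_subset fun i _ => ?_
    have hcenter : (i : ℚ_[p]) * p ^ n ∈ closedBall 0 ((p : ℝ) ^ (-n)) := by
      rw [mem_closedBall_zero_iff, norm_mul, norm_p_zpow]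
      exact mul_le_of_le_one_left (by positivity) (IsUltrametricDist.norm_natCast_le_one ℚ_[p] i)
    rw [IsUltrametricDist.closedBall_eq_of_mem hcenter]
    exact closedBall_subset_closedBall
      (zpow_le_zpow_right₀ (by exact_mod_cast (Fact.out : p.Prime).one_le) (by omega))

lemma pairwiseDisjoint_closedBall_natCast_mul_zpow (n : ℤ) :
    (Finset.range p : Set ℕ).PairwiseDisjoint
      fun i : ℕ => closedBall ((i : ℚ_[p]) * p ^ n) ((p : ℝ) ^ (-(n + 1))) := by
  have hp : (1 : ℝ) < p := by exact_mod_cast (Fact.out : p.Prime).one_lt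
  intro i hi j hj hij
  refine (IsUltrametricDist.closedBall_eq_or_disjoint _ _ _).resolve_left fun h => hij ?_
  have hji : (j : ℚ_[p]) * p ^ n ∈ closedBall ((i : ℚ_[p]) * p ^ n) ((p : ℝ) ^ (-(n + 1))) :=
    h ▸ mem_closedBall_self (by positivity)
  rw [mem_closedBall_iff_norm, ← sub_mul, norm_mul, norm_p_zpow, neg_add,
    zpow_add₀ (by positivity), mul_comm] at hji
  have hnorm : ‖((j - i : ℤ) : ℚ_[p])‖ < 1 := by
    push_cast
    exact (le_of_mul_le_mul_left hji (by positivity)).trans_lt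
      (zpow_lt_one_of_neg₀ hp (by norm_num))
  have hdvd := norm_intCast_lt_one_iff.1 hnorm
  simp only [Finset.coe_range, mem_Iio] at hi hj
  have := Int.eq_zero_of_abs_lt_dvd hdvd (by rw [abs_lt]; omega)
  omega

variable [MeasurableSpace ℚ_[p]] [BorelSpace ℚ_[p]] (μ : Measure ℚ_[p]) [μ.IsAddHaarMeasure]

lemma measure_closedBall_zero_zpow_eq_mul (n : ℤ) :
    μ (closedBall 0 ((p : ℝ) ^ (-n))) = p * μ (closedBall 0 ((p : ℝ) ^ (-(n + 1)))) := by
  rw [closedBall_zero_zpow_eq_biUnion, measure_biUnion_finset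
    (pairwiseDisjoint_closedBall_natCast_mul_zpow n) fun _ _ => measurableSet_closedBall]
  simp_rw [Measure.addHaar_closedBall_center μ]
  rw [Finset.sum_const, Finset.card_range, nsmul_eq_mul]

lemma measure_closedBall_zpow (hμ : μ (closedBall 0 1) = 1) (c : ℚ_[p]) (n : ℤ) :
    μ (closedBall c ((p : ℝ) ^ (-n))) = ENNReal.ofReal ((p : ℝ) ^ (-n)) := by
  have hp : (p : ℝ) ≠ 0 := by exact_mod_cast (Fact.out : p.Prime).ne_zero
  have hscale (k : ℤ) :
      ENNReal.ofReal ((p : ℝ) ^ (-k)) = p * ENNReal.ofReal ((p : ℝ) ^ (-(k + 1))) := by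
    rw [← ENNReal.ofReal_natCast, ← ENNReal.ofReal_mul (by positivity), ← zpow_one_add₀ hp]
    ring_nf
  rw [Measure.addHaar_closedBall_center]
  induction n using Int.induction_on with
  | zero => simpa using hμ
  | succ k ih =>
    rw [measure_closedBall_zero_zpow_eq_mul, hscale] at ih
    exact (ENNReal.mul_right_inj (by simpa using (Fact.out : p.Prime).ne_zero)
      (ENNReal.natCast_ne_top p)).1 ih
  | pred k ih =>
    rw [measure_closedBall_zero_zpow_eq_mul, sub_add_cancel, ih, hscale (-k - 1), sub_add_cancel]

lemma measureReal_closedBall_zpow (hμ : μ (closedBall 0 1) = 1) (c : ℚ_[p]) (n : ℤ) :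
    μ.real (closedBall c ((p : ℝ) ^ (-n))) = (p : ℝ) ^ (-n) := by
  rw [measureReal_def, measure_closedBall_zpow μ hμ, ENNReal.toReal_ofReal (by positivity)]

end Padic

section PairwiseDisjoint

variable {ι α R : Type*} [CommSemiring R] {s : Finset ι} {B : ι → Set α}

lemma sum_mul_ite_mem_eq_of_pairwiseDisjoint (hB : (s : Set ι).PairwiseDisjoint B) {i : ι}
    (hi : i ∈ s) {x : α} (hx : x ∈ B i) [∀ j, Decidable (x ∈ B j)] (f : ι → R) :
    ∑ j ∈ s, f j * (if x ∈ B j then 1 else 0) = f i := by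
  rw [Finset.sum_eq_single_of_mem i hi fun j hj hji => ?_, if_pos hx, mul_one]
  rw [if_neg fun hxj => hji (hB.elim_set hj hi x hxj hx), mul_zero]

lemma sum_sum_mul_ite_mem_mul_ite_mem_eq_of_pairwiseDisjoint
    (hB : (s : Set ι).PairwiseDisjoint B) {i k : ι} (hi : i ∈ s) (hk : k ∈ s) {x y : α}
    (hx : x ∈ B i) (hy : y ∈ B k) [∀ j, Decidable (x ∈ B j)] [∀ j, Decidable (y ∈ B j)]
    (a : ι → ι → R) :
    ∑ j ∈ s, ∑ l ∈ s, a j l * (if x ∈ B j then 1 else 0) * (if y ∈ B l then 1 else 0) =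
      a i k := by
  calc _ = ∑ j ∈ s, (∑ l ∈ s, a j l * (if y ∈ B l then 1 else 0)) *
        (if x ∈ B j then 1 else 0) :=
        Finset.sum_congr rfl fun j _ => by
          rw [Finset.sum_mul]
          exact Finset.sum_congr rfl fun l _ => mul_right_comm _ _ _
    _ = a i k := by
      rw [sum_mul_ite_mem_eq_of_pairwiseDisjoint hB hi hx,
        sum_mul_ite_mem_eq_of_pairwiseDisjoint hB hk hy]

end PairwiseDisjoint

section SetIntegral

variable {α ι E : Type*} [MeasurableSpace α] {μ : Measure α} [NormedAddCommGroup E]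
  {s : Finset ι} {B : ι → Set α} {f : α → E} {c : ι → E}

lemma integrableOn_biUnion_of_eqOn_const (hBm : ∀ i ∈ s, MeasurableSet (B i))
    (hBfin : ∀ i ∈ s, μ (B i) ≠ ∞) (hf : ∀ i ∈ s, EqOn f (fun _ => c i) (B i)) :
    IntegrableOn f (⋃ i ∈ s, B i) μ :=
  integrableOn_finset_iUnion.2 fun i hi =>
    (integrableOn_congr_fun (hf i hi) (hBm i hi)).2 (integrableOn_const (hBfin i hi))

lemma setIntegral_biUnion_of_eqOn_const [NormedSpace ℝ E] [CompleteSpace E]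
    (hBm : ∀ i ∈ s, MeasurableSet (B i)) (hB : (s : Set ι).PairwiseDisjoint B)
    (hBfin : ∀ i ∈ s, μ (B i) ≠ ∞)
    (hf : ∀ i ∈ s, EqOn f (fun _ => c i) (B i)) :
    ∫ y in ⋃ i ∈ s, B i, f y ∂μ = ∑ i ∈ s, μ.real (B i) • c i := by
  rw [integral_biUnion_finset s hBm hB fun i hi =>
    integrableOn_finset_iUnion.1 (integrableOn_biUnion_of_eqOn_const hBm hBfin hf) i hi]
  exact Finset.sum_congr rfl fun i hi => by
    rw [setIntegral_congr_fun (hBm i hi) (hf i hi), setIntegral_const]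

lemma setIntegral_sub_mul_ofReal_eq {S T : Set α} {Ψ : α → ℂ} {k : α → ℝ} {c : ℝ}
    (hΨ : Integrable Ψ μ) (hΨT : ∀ y ∉ T, Ψ y = 0) (hTS : T ⊆ S) (hk : IntegrableOn k S μ)
    (hkT : EqOn k (fun _ => c) T) (a : ℂ) :
    ∫ y in S, (Ψ y - a) * (k y : ℂ) ∂μ = c * ∫ y, Ψ y ∂μ - a * ∫ y in S, k y ∂μ := by
  have hΨk (y : α) : Ψ y * k y = c * Ψ y := by
    by_cases hy : y ∈ T
    · rw [hkT hy, mul_comm]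
    · simp [hΨT y hy]
  have hak : IntegrableOn (fun y => a * (k y : ℂ)) S μ := hk.ofReal.const_mul a
  simp_rw [sub_mul, hΨk]
  rw [integral_sub (hΨ.const_mul _).integrableOn hak, integral_const_mul, integral_const_mul,
    integral_complex_ofReal, setIntegral_eq_integral_of_forall_compl_eq_zero fun y hy =>
      hΨT y fun hyT => hy (hTS hyT)]

end SetIntegral

theorem stmt12_general (p : ℕ) [Fact p.Prime] [MeasurableSpace ℚ_[p]] [BorelSpace ℚ_[p]]
    (μ : Measure ℚ_[p]) [μ.IsAddHaarMeasure]
    (hμ : μ (Metric.closedBall 0 1) = 1)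
    (G : Finset ℚ_[p]) (N : ℤ)
    (hdisj : (G : Set ℚ_[p]).PairwiseDisjoint
      (fun I => Metric.closedBall I ((p : ℝ)^(-N))))
    (Kset : Set ℚ_[p]) (hK : Kset = ⋃ I ∈ G, Metric.closedBall I ((p : ℝ)^(-N)))
    (A : ℚ_[p] → ℚ_[p] → ℝ)
    (γ : ℚ_[p] → ℝ) (hγ : ∀ I, γ I = ∑ K ∈ G, A I K)
    (JN : ℚ_[p] → ℚ_[p] → ℝ)
    (hJN : ∀ x y, JN x y = (p : ℝ)^N * ∑ J ∈ G, ∑ K ∈ G, A J K *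
      (if ‖x - J‖ ≤ (p : ℝ)^(-N) then 1 else 0) *
      (if ‖y - K‖ ≤ (p : ℝ)^(-N) then 1 else 0))
    (I : ℚ_[p]) (hI : I ∈ G)
    (Ψ : ℚ_[p] → ℂ) (hΨint : Integrable Ψ μ)
    (hsupp : ∀ x, x ∉ Metric.closedBall I ((p : ℝ)^(-N)) → Ψ x = 0)
    (hzero : ∫ y, Ψ y ∂μ = 0) :
    ∀ x ∈ Kset, ∫ y in Kset, (Ψ y - Ψ x) * (JN x y : ℂ) ∂μ = -(γ I : ℂ) * Ψ x := by
  intro x hx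
  classical
  simp only [← mem_closedBall_iff_norm] at hJN
  subst hK
  obtain ⟨J₀, hJ₀, hxJ₀⟩ := mem_iUnion₂.1 hx
  have hrow : ∀ K ∈ G, EqOn (JN x) (fun _ => (p : ℝ) ^ N * A J₀ K)
      (closedBall K ((p : ℝ) ^ (-N))) := fun K hK y hy => by
    rw [hJN, sum_sum_mul_ite_mem_mul_ite_mem_eq_of_pairwiseDisjoint hdisj hJ₀ hK hxJ₀ hy]
  have hfin : ∀ K ∈ G, μ (closedBall K ((p : ℝ) ^ (-N))) ≠ ∞ :=
    fun _ _ => measure_closedBall_lt_top.ne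
  have hmass : ∫ y in ⋃ K ∈ G, closedBall K ((p : ℝ) ^ (-N)), JN x y ∂μ = γ J₀ := by
    rw [setIntegral_biUnion_of_eqOn_const (fun _ _ => measurableSet_closedBall) hdisj hfin hrow,
      hγ]
    refine Finset.sum_congr rfl fun K _ => ?_
    rw [Padic.measureReal_closedBall_zpow μ hμ, smul_eq_mul, ← mul_assoc,
      ← zpow_add₀ (by exact_mod_cast (Fact.out : p.Prime).ne_zero), neg_add_cancel, zpow_zero,
      one_mul]
  have hγx : Ψ x * γ J₀ = Ψ x * γ I := by
    by_cases hxI : x ∈ closedBall I ((p : ℝ) ^ (-N))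
    · rw [hdisj.elim_set hJ₀ hI x hxJ₀ hxI]
    · simp [hsupp x hxI]
  rw [setIntegral_sub_mul_ofReal_eq hΨint hsupp
      (subset_iUnion₂ (s := fun K _ => closedBall K ((p : ℝ) ^ (-N))) I hI)
      (integrableOn_biUnion_of_eqOn_const (fun _ _ => measurableSet_closedBall) hfin hrow)
      (hrow I hI), hzero, hmass, hγx]
  ring

theorem stmt12 (p : ℕ) [Fact p.Prime] [MeasurableSpace ℚ_[p]] [BorelSpace ℚ_[p]]
    (μ : Measure ℚ_[p]) [μ.IsAddHaarMeasure]
    (hμ : μ (Metric.closedBall 0 1) = 1)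
    (G : Finset ℚ_[p]) (N : ℤ)
    (hdisj : (G : Set ℚ_[p]).PairwiseDisjoint
      (fun I => Metric.closedBall I ((p : ℝ)^(-N))))
    (Kset : Set ℚ_[p]) (hK : Kset = ⋃ I ∈ G, Metric.closedBall I ((p : ℝ)^(-N)))
    (A : ℚ_[p] → ℚ_[p] → ℝ) (hA : ∀ J K, 0 ≤ A J K)
    (γ : ℚ_[p] → ℝ) (hγ : ∀ I, γ I = ∑ K ∈ G, A I K)
    (JN : ℚ_[p] → ℚ_[p] → ℝ)
    (hJN : ∀ x y, JN x y = (p : ℝ)^N * ∑ J ∈ G, ∑ K ∈ G, A J K *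
      (if ‖x - J‖ ≤ (p : ℝ)^(-N) then 1 else 0) *
      (if ‖y - K‖ ≤ (p : ℝ)^(-N) then 1 else 0))
    (I : ℚ_[p]) (hI : I ∈ G)
    (Ψ : ℚ_[p] → ℂ) (hΨint : Integrable Ψ μ)
    (hsupp : ∀ x, x ∉ Metric.closedBall I ((p : ℝ)^(-N)) → Ψ x = 0)
    (hzero : ∫ y, Ψ y ∂μ = 0) :
    ∀ x ∈ Kset, ∫ y in Kset, (Ψ y - Ψ x) * (JN x y : ℂ) ∂μ = -(γ I : ℂ) * Ψ x :=
  stmt12_general p μ hμ G N hdisj Kset hK A γ hγ JN hJN I hI Ψ hΨint hsupp hzero
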